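/- Let X be a simplicial set, H an Abelian group, and η an N(H)-valued twisting function on X. Then the twisted bundle π_η : N(H) ×_η X → X is relatively 2-coskeletal: for every n > 2, every lifting problem of a map ∂Δ^n → N(H) ×_η X over a given map Δ^n → X has a unique solution. -/

import Mathlib

open CategoryTheory Simplicial

/-- The face maps of the nerve `N(H)` of an Abelian group `H` (bar construction):
`d_0` drops the first entry, `d_n` drops the last, and `d_i` adds the entries in
positions `i-1` and `i`. -/
def barδ {H : Type} [AddCommGroup H] {n : ℕ} (i : Fin (n + 2))
    (a : Fin (n + 1) → H) : Fin n → H :=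
  fun k =>
    if h1 : (k : ℕ) + 1 < (i : ℕ) then a ⟨k, by omega⟩
    else if h2 : (k : ℕ) + 1 = (i : ℕ) then a ⟨k, by omega⟩ + a ⟨(k : ℕ) + 1, by omega⟩
    else a ⟨(k : ℕ) + 1, by omega⟩

/-- The degeneracy maps of the nerve `N(H)`: `s_j` inserts the identity at position `j`. -/
def barσ {H : Type} [AddCommGroup H] {n : ℕ} (j : Fin (n + 1))
    (a : Fin n → H) : Fin (n + 1) → H :=
  fun k =>
    if h1 : (k : ℕ) < (j : ℕ) then a ⟨k, by omega⟩
    else if h2 : (k : ℕ) = (j : ℕ) then 0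
    else a ⟨(k : ℕ) - 1, by omega⟩

/-- The defining identities of a twisting function on `X` with values in the nerve
`N(H)` of an Abelian group `H` (whose `(n-1)`-simplices are `(n-1)`-tuples in `H`):
`d_0 η(x) = η(d_1 x) − η(d_0 x)`, `d_i η(x) = η(d_{i+1} x)` for `i > 0`,
`η(s_0 x) = 0`, and `η(s_j x) = s_{j-1}(η(x))` for `j > 0`. -/
def IsBarTwisting (X : SSet.{0}) (H : Type) [AddCommGroup H]
    (η : ∀ n, X _⦋n + 1⦌ → Fin n → H) : Prop :=
  (∀ (n : ℕ) (x : X _⦋n + 2⦌),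
      barδ 0 (η (n + 1) x) = η n (X.δ 1 x) - η n (X.δ 0 x)) ∧
  (∀ (n : ℕ) (i : Fin (n + 1)) (x : X _⦋n + 2⦌),
      barδ i.succ (η (n + 1) x) = η n (X.δ i.succ.succ x)) ∧
  (∀ (n : ℕ) (x : X _⦋n⦌), η n (X.σ 0 x) = 0) ∧
  (∀ (n : ℕ) (j : Fin (n + 1)) (x : X _⦋n + 1⦌),
      η (n + 1) (X.σ j.succ x) = barσ j (η n x))

/-- Iterated top face maps `d_3 ⋯ d_n : X_n → X_2`. -/
def lastFaces (X : SSet.{0}) : ∀ (m : ℕ), X _⦋m + 2⦌ → X _⦋2⦌ := fun m x => match m, x with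
  | 0, x => x
  | (m + 1), x => lastFaces X m (X.δ (Fin.last (m + 3)) x)

/-- The face maps of the twisted product `N(H) ×_η X`: the `d₀`-face is twisted by
`η`, all other faces act componentwise (via the bar-construction faces of `N(H)`). -/
def ntwδ (X : SSet.{0}) (H : Type) [AddCommGroup H]
    (η : ∀ n, X _⦋n + 1⦌ → Fin n → H) {n : ℕ} (i : Fin (n + 2))
    (p : (Fin (n + 1) → H) × X _⦋n + 1⦌) : (Fin n → H) × X _⦋n⦌ :=
  if i = 0 then (barδ 0 p.1 + η n p.2, X.δ 0 p.2) else (barδ i p.1, X.δ i p.2)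

lemma barδ_lt {H : Type} [AddCommGroup H] {n : ℕ} (i : Fin (n + 2))
    (a : Fin (n + 1) → H) (k : Fin n) (h : (k : ℕ) + 1 < (i : ℕ)) :
    barδ i a k = a ⟨k, by omega⟩ := by
  simp [barδ, h]

lemma barδ_mid {H : Type} [AddCommGroup H] {n : ℕ} (i : Fin (n + 2))
    (a : Fin (n + 1) → H) (k : Fin n) (h : (k : ℕ) + 1 = (i : ℕ)) :
    barδ i a k = a ⟨k, by omega⟩ + a ⟨(k : ℕ) + 1, by omega⟩ := by
  simp [barδ, h]

lemma barδ_gt {H : Type} [AddCommGroup H] {n : ℕ} (i : Fin (n + 2))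
    (a : Fin (n + 1) → H) (k : Fin n) (h : (i : ℕ) < (k : ℕ) + 1) :
    barδ i a k = a ⟨(k : ℕ) + 1, by omega⟩ := by
  have h1 : ¬ ((k : ℕ) + 1 < (i : ℕ)) := by omega
  have h2 : ¬ ((k : ℕ) + 1 = (i : ℕ)) := by omega
  simp [barδ, h1, h2]

lemma barδ_sub {H : Type} [AddCommGroup H] {n : ℕ} (i : Fin (n + 2))
    (a b : Fin (n + 1) → H) :
    barδ i (a - b) = barδ i a - barδ i b := by
  funext k
  simp only [barδ, Pi.sub_apply]
  split_ifs <;> abel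

lemma barδ_lt' {H : Type} [AddCommGroup H] {n : ℕ} (i k : ℕ) (hi : i < n + 2)
    (hk : k < n) (a : Fin (n + 1) → H) (h : k + 1 < i) :
    barδ ⟨i, hi⟩ a ⟨k, hk⟩ = a ⟨k, by omega⟩ :=
  barδ_lt _ _ _ h

lemma barδ_mid' {H : Type} [AddCommGroup H] {n : ℕ} (i k : ℕ) (hi : i < n + 2)
    (hk : k < n) (a : Fin (n + 1) → H) (h : k + 1 = i) :
    barδ ⟨i, hi⟩ a ⟨k, hk⟩ = a ⟨k, by omega⟩ + a ⟨k + 1, by omega⟩ :=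
  barδ_mid _ _ _ h

lemma barδ_gt' {H : Type} [AddCommGroup H] {n : ℕ} (i k : ℕ) (hi : i < n + 2)
    (hk : k < n) (a : Fin (n + 1) → H) (h : i < k + 1) :
    barδ ⟨i, hi⟩ a ⟨k, hk⟩ = a ⟨k + 1, by omega⟩ :=
  barδ_gt _ _ _ h

/-- The candidate filler for a compatible boundary in `N(H)`. -/
def barLift {H : Type} [AddCommGroup H] (m : ℕ)
    (f : Fin (m + 4) → Fin (m + 2) → H) : Fin (m + 3) → H :=
  fun t =>
    if h : (t : ℕ) < m + 2 then f ⟨m + 3, by omega⟩ ⟨t, h⟩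
    else f ⟨m + 2, by omega⟩ ⟨m + 1, by omega⟩ - f ⟨m + 3, by omega⟩ ⟨m + 1, by omega⟩

lemma barLift_low {H : Type} [AddCommGroup H] (m : ℕ)
    (f : Fin (m + 4) → Fin (m + 2) → H) (t : ℕ) (h' : t < m + 3) (h : t < m + 2) :
    barLift m f ⟨t, h'⟩ = f ⟨m + 3, by omega⟩ ⟨t, h⟩ := by
  rw [barLift]
  exact dif_pos h

lemma barLift_high {H : Type} [AddCommGroup H] (m : ℕ)
    (f : Fin (m + 4) → Fin (m + 2) → H) (t : ℕ) (h' : t < m + 3) (h : ¬ t < m + 2) :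
    barLift m f ⟨t, h'⟩
      = f ⟨m + 2, by omega⟩ ⟨m + 1, by omega⟩ - f ⟨m + 3, by omega⟩ ⟨m + 1, by omega⟩ := by
  rw [barLift]
  exact dif_neg h

lemma barLift_spec {H : Type} [AddCommGroup H] (m : ℕ)
    (f : Fin (m + 4) → Fin (m + 2) → H)
    (hf : ∀ (i j : Fin (m + 3)), i ≤ j → barδ i (f j.succ) = barδ j (f i.castSucc)) :
    ∀ i, barδ i (barLift m f) = f i := by
  -- A1 : for p ≤ q ≤ m,  f p q = f (m+3) (q+1)
  have hA1 : ∀ p q : ℕ, ∀ (hpq : p ≤ q) (hq : q ≤ m),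
      f ⟨p, by omega⟩ ⟨q, by omega⟩ = f ⟨m + 3, by omega⟩ ⟨q + 1, by omega⟩ := by
    intro p q hpq hq
    have h := congrFun (hf ⟨p, by omega⟩ ⟨m + 2, by omega⟩ (by simp [Fin.le_def]; omega))
      (⟨q, by omega⟩ : Fin (m + 1))
    rw [Fin.succ_mk, Fin.castSucc_mk] at h
    rw [barδ_gt' p q _ _ _ (by omega), barδ_lt' (m + 2) q _ _ _ (by omega)] at h
    exact h.symm
  -- A2 : for q ≤ m,  f (q+1) q = f (m+3) q + f (m+3) (q+1)
  have hA2 : ∀ q : ℕ, ∀ (hq : q ≤ m),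
      f ⟨q + 1, by omega⟩ ⟨q, by omega⟩
        = f ⟨m + 3, by omega⟩ ⟨q, by omega⟩ + f ⟨m + 3, by omega⟩ ⟨q + 1, by omega⟩ := by
    intro q hq
    have h := congrFun (hf ⟨q + 1, by omega⟩ ⟨m + 2, by omega⟩ (by simp [Fin.le_def]; omega))
      (⟨q, by omega⟩ : Fin (m + 1))
    rw [Fin.succ_mk, Fin.castSucc_mk] at h
    rw [barδ_mid' (q + 1) q _ _ _ rfl, barδ_lt' (m + 2) q _ _ _ (by omega)] at h
    exact h.symm
  -- A3 : for q + 2 ≤ p ≤ m + 2, q ≤ m,  f p q = f (m+3) q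
  have hA3 : ∀ p q : ℕ, ∀ (h1 : q + 2 ≤ p) (h2 : p ≤ m + 2) (h3 : q ≤ m),
      f ⟨p, by omega⟩ ⟨q, by omega⟩ = f ⟨m + 3, by omega⟩ ⟨q, by omega⟩ := by
    intro p q h1 h2 h3
    have h := congrFun (hf ⟨p, by omega⟩ ⟨m + 2, by omega⟩ (by simp [Fin.le_def]; omega))
      (⟨q, by omega⟩ : Fin (m + 1))
    rw [Fin.succ_mk, Fin.castSucc_mk] at h
    rw [barδ_lt' p q _ _ _ (by omega), barδ_lt' (m + 2) q _ _ _ (by omega)] at h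
    exact h.symm
  -- A4 : for p ≤ m + 1,  f p (m+1) = f (m+2) (m+1) - f (m+3) (m+1)
  have hA4 : ∀ p : ℕ, ∀ (hp : p ≤ m + 1),
      f ⟨p, by omega⟩ ⟨m + 1, by omega⟩
        = f ⟨m + 2, by omega⟩ ⟨m + 1, by omega⟩ - f ⟨m + 3, by omega⟩ ⟨m + 1, by omega⟩ := by
    intro p hp
    rcases Nat.lt_or_ge p (m + 1) with hp' | hp'
    · -- p ≤ m
      have h := congrFun (hf ⟨p, by omega⟩ ⟨m + 1, by omega⟩ (by simp [Fin.le_def]; omega))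
        (⟨m, by omega⟩ : Fin (m + 1))
      rw [Fin.succ_mk, Fin.castSucc_mk] at h
      rw [barδ_gt' p m _ _ _ (by omega), barδ_mid' (m + 1) m _ _ _ rfl] at h
      rw [hA1 p m (by omega) le_rfl] at h
      -- h : f ⟨m+1+1⟩ ⟨m+1⟩ = f ⟨m+3⟩ ⟨m+1⟩ + f ⟨p⟩ ⟨m+1⟩
      rw [show (⟨m + 2, by omega⟩ : Fin (m + 4)) = ⟨m + 1 + 1, by omega⟩ from rfl, h]
      abel
    · -- p = m + 1
      have hpe : p = m + 1 := by omega
      subst hpe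
      have h := congrFun (hf ⟨m + 1, by omega⟩ ⟨m + 1, by omega⟩ le_rfl)
        (⟨m, by omega⟩ : Fin (m + 1))
      rw [Fin.succ_mk, Fin.castSucc_mk] at h
      rw [barδ_mid' (m + 1) m _ _ _ rfl, barδ_mid' (m + 1) m _ _ _ rfl] at h
      rw [hA2 m le_rfl, hA3 (m + 1 + 1) m (by omega) (by omega) le_rfl] at h
      -- h : f ⟨m+3⟩ ⟨m⟩ + f ⟨m+1+1⟩ ⟨m+1⟩ = f ⟨m+3⟩ ⟨m⟩ + f ⟨m+3⟩ ⟨m+1⟩ + f ⟨m+1⟩ ⟨m+1⟩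
      have h' : f ⟨m + 1 + 1, by omega⟩ ⟨m + 1, by omega⟩
          = f ⟨m + 3, by omega⟩ ⟨m + 1, by omega⟩ + f ⟨m + 1, by omega⟩ ⟨m + 1, by omega⟩ := by
        refine add_left_cancel (a := f ⟨m + 3, by omega⟩ ⟨m, by omega⟩) ?_
        rw [h]
        abel
      rw [show (⟨m + 2, by omega⟩ : Fin (m + 4)) = ⟨m + 1 + 1, by omega⟩ from rfl, h']
      abel
  intro i
  funext k
  rcases i with ⟨iv, hiv⟩
  rcases k with ⟨kv, hkv⟩
  rcases Nat.lt_trichotomy (kv + 1) iv with hc | hc | hc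
  · -- kv + 1 < iv
    rw [barδ_lt' iv kv _ _ _ hc, barLift_low m f kv (by omega) (by omega)]
    rcases Nat.lt_or_ge iv (m + 3) with hi | hi
    · exact (hA3 iv kv (by omega) (by omega) (by omega)).symm
    · have : iv = m + 3 := by omega
      subst this
      rfl
  · -- kv + 1 = iv
    subst hc
    rw [barδ_mid' (kv + 1) kv _ _ _ rfl]
    rcases Nat.lt_or_ge kv (m + 1) with hk | hk
    · rw [barLift_low m f kv (by omega) (by omega),
        barLift_low m f (kv + 1) (by omega) (by omega)]
      exact (hA2 kv (by omega)).symm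
    · -- kv = m + 1
      have hk' : kv = m + 1 := by omega
      subst hk'
      rw [barLift_low m f (m + 1) (by omega) (by omega),
        barLift_high m f (m + 1 + 1) (by omega) (by omega)]
      rw [show (⟨m + 1 + 1, hiv⟩ : Fin (m + 4)) = ⟨m + 2, by omega⟩ from rfl]
      abel
  · -- iv < kv + 1
    rw [barδ_gt' iv kv _ _ _ hc]
    rcases Nat.lt_or_ge kv (m + 1) with hk | hk
    · rw [barLift_low m f (kv + 1) (by omega) (by omega)]
      exact (hA1 iv kv (by omega) (by omega)).symm
    · have hk' : kv = m + 1 := by omega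
      subst hk'
      rw [barLift_high m f (m + 1 + 1) (by omega) (by omega)]
      exact (hA4 iv (by omega)).symm

lemma barLift_unique {H : Type} [AddCommGroup H] (m : ℕ)
    (f : Fin (m + 4) → Fin (m + 2) → H) (b : Fin (m + 3) → H)
    (hb : ∀ i, barδ i b = f i) : b = barLift m f := by
  funext t
  rcases t with ⟨tv, htv⟩
  rcases Nat.lt_or_ge tv (m + 2) with ht | ht
  · have h := congrFun (hb ⟨m + 3, by omega⟩) (⟨tv, by omega⟩ : Fin (m + 2))
    rw [barδ_lt' (m + 3) tv _ _ _ (by omega)] at h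
    rw [barLift_low m f tv (by omega) ht]
    exact h
  · have ht' : tv = m + 2 := by omega
    subst ht'
    have h1 := congrFun (hb ⟨m + 2, by omega⟩) (⟨m + 1, by omega⟩ : Fin (m + 2))
    rw [barδ_mid' (m + 2) (m + 1) _ _ _ rfl] at h1
    have h2 := congrFun (hb ⟨m + 3, by omega⟩) (⟨m + 1, by omega⟩ : Fin (m + 2))
    rw [barδ_lt' (m + 3) (m + 1) _ _ _ (by omega)] at h2
    rw [barLift_high m f (m + 2) (by omega) (by omega)]
    rw [← h1, ← h2]
    rw [show (⟨m + 2, htv⟩ : Fin (m + 3)) = ⟨m + 1 + 1, by omega⟩ from rfl]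
    abel

lemma ntwδ_zero (X : SSet.{0}) (H : Type) [AddCommGroup H]
    (η : ∀ n, X _⦋n + 1⦌ → Fin n → H) {n : ℕ}
    (p : (Fin (n + 1) → H) × X _⦋n + 1⦌) :
    ntwδ X H η 0 p = (barδ 0 p.1 + η n p.2, X.δ 0 p.2) := if_pos rfl

lemma ntwδ_ne (X : SSet.{0}) (H : Type) [AddCommGroup H]
    (η : ∀ n, X _⦋n + 1⦌ → Fin n → H) {n : ℕ} (i : Fin (n + 2))
    (p : (Fin (n + 1) → H) × X _⦋n + 1⦌) (hi : i ≠ 0) :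
    ntwδ X H η i p = (barδ i p.1, X.δ i p.2) := if_neg hi

/-- For an Abelian group `H` and an `N(H)`-valued twisting function
`η` on a simplicial set `X`, the twisted bundle `π_η : N(H) ×_η X → X` is relatively
2-coskeletal over `X`: for every `n > 2`, every lifting problem of a map
`∂Δ^n → N(H) ×_η X` over a given `n`-simplex `Δ^n → X` has a unique solution.  (A map
`∂Δ^n → N(H) ×_η X` is a family of `(n-1)`-simplices `e_0, …, e_n` satisfying the
compatibility `d_i e_j = d_{j-1} e_i` for `i < j`; it lies over `x : Δ^n → X` when the
projection of `e_i` is `d_i x`; a solution is an `n`-simplex `z` over `x` with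
`d_i z = e_i` for all `i`.) -/
theorem nerve_twisted_bundle_relatively_two_coskeletal (X : SSet.{0}) (H : Type)
    [AddCommGroup H] (η : ∀ n, X _⦋n + 1⦌ → Fin n → H)
    (hη : IsBarTwisting X H η) :
    ∀ (m : ℕ) (x : X _⦋m + 3⦌) (e : Fin (m + 4) → (Fin (m + 2) → H) × X _⦋m + 2⦌),
      (∀ i : Fin (m + 4), (e i).2 = X.δ i x) →
      (∀ (i j : Fin (m + 3)), i ≤ j →
        ntwδ X H η i (e j.succ) = ntwδ X H η j (e i.castSucc)) →
      ∃! z : (Fin (m + 3) → H) × X _⦋m + 3⦌,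
        z.2 = x ∧ ∀ i : Fin (m + 4), ntwδ X H η i z = e i := by
  obtain ⟨hη1, hη2, hη3, hη4⟩ := hη
  intro m x e he hc
  set F : Fin (m + 4) → Fin (m + 2) → H :=
    fun i => if i = 0 then (e 0).1 - η (m + 2) x else (e i).1 with hF
  have hF0 : F 0 = (e 0).1 - η (m + 2) x := by simp [hF]
  have hFi : ∀ i : Fin (m + 4), i ≠ 0 → F i = (e i).1 := fun i hi => by simp [hF, hi]
  have hδ0 : barδ (0 : Fin (m + 3)) (η (m + 2) x)
      = η (m + 1) (X.δ 1 x) - η (m + 1) (X.δ 0 x) := hη1 (m + 1) x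
  have hδs : ∀ k : Fin (m + 2), barδ k.succ (η (m + 2) x)
      = η (m + 1) (X.δ k.succ.succ x) := fun k => hη2 (m + 1) k x
  have hf : ∀ (i j : Fin (m + 3)), i ≤ j → barδ i (F j.succ) = barδ j (F i.castSucc) := by
    intro i j hij
    by_cases hi : i = 0
    · subst hi
      rw [Fin.castSucc_zero]
      by_cases hj : j = 0
      · subst hj
        rw [Fin.succ_zero_eq_one, hFi 1 (by exact one_ne_zero), hF0, barδ_sub, hδ0]
        rw [← he 0, ← he 1]
        have h := hc 0 0 le_rfl
        rw [Fin.succ_zero_eq_one, Fin.castSucc_zero, ntwδ_zero, ntwδ_zero,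
          Prod.mk.injEq] at h
        obtain ⟨h, -⟩ := h
        rw [eq_sub_of_add_eq h]
        abel
      · rw [hFi j.succ (Fin.succ_ne_zero j), hF0, barδ_sub]
        obtain ⟨k, rfl⟩ := Fin.eq_succ_of_ne_zero hj
        rw [hδs k, ← he k.succ.succ]
        have h := hc 0 k.succ (Fin.zero_le _)
        rw [Fin.castSucc_zero, ntwδ_zero, ntwδ_ne X H η k.succ _ (Fin.succ_ne_zero k),
          Prod.mk.injEq] at h
        obtain ⟨h, -⟩ := h
        exact eq_sub_of_add_eq h
    · have hj : j ≠ 0 := by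
        intro h
        exact hi (le_antisymm (h ▸ hij) (Fin.zero_le _))
      rw [hFi j.succ (Fin.succ_ne_zero j),
        hFi i.castSucc (fun h => hi (Fin.castSucc_eq_zero_iff.mp h))]
      have h := hc i j hij
      rw [ntwδ_ne X H η i _ hi, ntwδ_ne X H η j _ hj, Prod.mk.injEq] at h
      exact h.1
  have hfF := barLift_spec m F hf
  refine ⟨(barLift m F, x), ⟨rfl, ?_⟩, ?_⟩
  · intro i
    by_cases hi : i = 0
    · subst hi
      rw [ntwδ_zero]
      dsimp only
      rw [hfF 0, hF0, ← he 0]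
      rw [show (e 0).1 - η (m + 2) x + η (m + 2) x = (e 0).1 from by abel]
    · rw [ntwδ_ne X H η i _ hi]
      dsimp only
      rw [hfF i, hFi i hi, ← he i]
  · rintro ⟨b', x'⟩ ⟨hx', hz⟩
    obtain rfl : x = x' := hx'.symm
    have hb : ∀ i, barδ i b' = F i := by
      intro i
      by_cases hi : i = 0
      · subst hi
        have h := hz 0
        rw [ntwδ_zero] at h
        have h1 : barδ (0 : Fin (m + 4)) b' + η (m + 2) x = (e 0).1 := congrArg Prod.fst h
        rw [hF0, eq_sub_iff_add_eq]
        exact h1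
      · have h := hz i
        rw [ntwδ_ne X H η i _ hi] at h
        have h1 : barδ i b' = (e i).1 := congrArg Prod.fst h
        rw [hFi i hi]
        exact h1
    rw [barLift_unique m F b' hb]
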